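/- arXiv:1806.05532 — 4 statements merged into one kernel-verified Lean document; each statement's English description precedes it below -/
import Mathlib

section
/- If u : ℝ² → ℝ is convex on every horizontal line and every vertical line (coordinate-convex) and u is bounded by M on the closed unit ball, then u is Lipschitz on the ball of radius 1/2 with Lipschitz constant at most C·M for a universal constant C. -/
open Set

/-- A function on ℝ² is coordinate-convex if it is convex along every horizontal
and vertical line. -/
def CoordConvex (u : ℝ × ℝ → ℝ) : Prop :=
  (∀ x2 : ℝ, ConvexOn ℝ univ (fun x1 => u (x1, x2))) ∧
  (∀ x1 : ℝ, ConvexOn ℝ univ (fun x2 => u (x1, x2)))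

private lemma oneD_aux (f : ℝ → ℝ) (M : ℝ) (hf : ConvexOn ℝ univ f)
    (hbd : ∀ t : ℝ, |t| ≤ 1 → |f t| ≤ M) {a b : ℝ} (ha : |a| ≤ 1/2) (hb : |b| ≤ 1/2)
    (hab : a < b) : f b - f a ≤ 4 * M * (b - a) := by
  obtain ⟨ha1, ha2⟩ := abs_le.mp ha
  obtain ⟨hb1, hb2⟩ := abs_le.mp hb
  have hfb := abs_le.mp (hbd b (by rw [abs_le]; constructor <;> linarith))
  have hf1 := abs_le.mp (hbd 1 (by norm_num))
  have h2 := hf.slope_mono_adjacent (mem_univ a) (mem_univ 1) hab (by linarith)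
  have hM : 0 ≤ M := le_trans (abs_nonneg _) (hbd 0 (by norm_num))
  have hub : (f 1 - f b) / (1 - b) ≤ 4 * M := by
    rw [div_le_iff₀ (by linarith)]; nlinarith
  have := (div_le_iff₀ (show 0 < b - a by linarith)).mp (le_trans h2 hub)
  linarith

private lemma oneD (f : ℝ → ℝ) (M : ℝ) (hf : ConvexOn ℝ univ f)
    (hbd : ∀ t : ℝ, |t| ≤ 1 → |f t| ≤ M) {a b : ℝ} (ha : |a| ≤ 1/2) (hb : |b| ≤ 1/2) :
    |f b - f a| ≤ 4 * M * |b - a| := by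
  rcases lt_trichotomy a b with h | h | h
  · have h1 := oneD_aux f M hf hbd ha hb h
    have h2 : f a - f b ≤ 4 * M * (b - a) := by
      obtain ⟨ha1, ha2⟩ := abs_le.mp ha
      obtain ⟨hb1, hb2⟩ := abs_le.mp hb
      have hfa := abs_le.mp (hbd a (by rw [abs_le]; constructor <;> linarith))
      have hfm := abs_le.mp (hbd (-1) (by norm_num))
      have hM : 0 ≤ M := le_trans (abs_nonneg _) (hbd 0 (by norm_num))
      have hs := hf.slope_mono_adjacent (mem_univ (-1)) (mem_univ b)
        (show (-1:ℝ) < a by linarith) h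
      have hlb : (-(4 * M)) ≤ (f a - f (-1)) / (a - (-1)) := by
        rw [le_div_iff₀ (by linarith)]; nlinarith
      have := (le_div_iff₀ (show 0 < b - a by linarith)).mp (le_trans hlb hs)
      linarith
    rw [abs_of_pos (by linarith : (0:ℝ) < b - a), abs_le]
    constructor <;> linarith
  · simp [h]
  · have h1 := oneD_aux f M hf hbd hb ha h
    have h2 : f b - f a ≤ 4 * M * (a - b) := by
      obtain ⟨ha1, ha2⟩ := abs_le.mp ha
      obtain ⟨hb1, hb2⟩ := abs_le.mp hb
      have hfb := abs_le.mp (hbd b (by rw [abs_le]; constructor <;> linarith))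
      have hfm := abs_le.mp (hbd (-1) (by norm_num))
      have hM : 0 ≤ M := le_trans (abs_nonneg _) (hbd 0 (by norm_num))
      have hs := hf.slope_mono_adjacent (mem_univ (-1)) (mem_univ a)
        (show (-1:ℝ) < b by linarith) h
      have hlb : (-(4 * M)) ≤ (f b - f (-1)) / (b - (-1)) := by
        rw [le_div_iff₀ (by linarith)]; nlinarith
      have := (le_div_iff₀ (show 0 < a - b by linarith)).mp (le_trans hlb hs)
      linarith
    rw [abs_sub_comm (f b), abs_sub_comm b a, abs_of_pos (show (0:ℝ) < a - b by linarith), abs_le]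
    constructor <;> linarith

theorem coordConvex_lipschitz :
    ∃ C : ℝ, 0 < C ∧ ∀ (u : ℝ × ℝ → ℝ) (M : ℝ), CoordConvex u →
      (∀ x : ℝ × ℝ, ‖x‖ ≤ 1 → |u x| ≤ M) →
      ∀ x y : ℝ × ℝ, ‖x‖ ≤ 1/2 → ‖y‖ ≤ 1/2 → |u x - u y| ≤ C * M * ‖x - y‖ := by
  refine ⟨8, by norm_num, fun u M hu hbd x y hx hy => ?_⟩
  have hM : 0 ≤ M := le_trans (abs_nonneg _) (hbd 0 (by simp))
  have hx1 : |x.1| ≤ 1/2 := le_trans (by rw [Prod.norm_def]; exact le_max_left _ _) hx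
  have hx2 : |x.2| ≤ 1/2 := le_trans (by rw [Prod.norm_def]; exact le_max_right _ _) hx
  have hy1 : |y.1| ≤ 1/2 := le_trans (by rw [Prod.norm_def]; exact le_max_left _ _) hy
  have hy2 : |y.2| ≤ 1/2 := le_trans (by rw [Prod.norm_def]; exact le_max_right _ _) hy
  -- horizontal step at height x.2
  have hstep1 : |u (y.1, x.2) - u (x.1, x.2)| ≤ 4 * M * |y.1 - x.1| := by
    refine oneD (fun t => u (t, x.2)) M (hu.1 x.2) (fun t ht => ?_) hx1 hy1
    refine hbd _ ?_
    rw [Prod.norm_def]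
    exact max_le (by simpa using ht) (by simpa using hx2.trans (by norm_num))
  have hstep2 : |u (y.1, y.2) - u (y.1, x.2)| ≤ 4 * M * |y.2 - x.2| := by
    refine oneD (fun t => u (y.1, t)) M (hu.2 y.1) (fun t ht => ?_) hx2 hy2
    refine hbd _ ?_
    rw [Prod.norm_def]
    exact max_le (by simpa using hy1.trans (by norm_num)) (by simpa using ht)
  have hd1 : |y.1 - x.1| ≤ ‖x - y‖ := by
    have : |y.1 - x.1| = |(x - y).1| := by simp [abs_sub_comm]
    rw [this, ← Real.norm_eq_abs]
    exact norm_fst_le _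
  have hd2 : |y.2 - x.2| ≤ ‖x - y‖ := by
    have : |y.2 - x.2| = |(x - y).2| := by simp [abs_sub_comm]
    rw [this, ← Real.norm_eq_abs]
    exact norm_snd_le _
  have hx' : x = (x.1, x.2) := rfl
  have hy' : y = (y.1, y.2) := rfl
  calc |u x - u y| = |(u (x.1, x.2) - u (y.1, x.2)) + (u (y.1, x.2) - u (y.1, y.2))| := by
        rw [← hx', ← hy']; ring_nf
    _ ≤ |u (x.1, x.2) - u (y.1, x.2)| + |u (y.1, x.2) - u (y.1, y.2)| := abs_add_le _ _
    _ = |u (y.1, x.2) - u (x.1, x.2)| + |u (y.1, y.2) - u (y.1, x.2)| := by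
        rw [abs_sub_comm (u (x.1, x.2)), abs_sub_comm (u (y.1, x.2)) (u (y.1, y.2))]
    _ ≤ 4 * M * |y.1 - x.1| + 4 * M * |y.2 - x.2| := add_le_add hstep1 hstep2
    _ ≤ 4 * M * ‖x - y‖ + 4 * M * ‖x - y‖ := by
        gcongr
    _ = 8 * M * ‖x - y‖ := by ring
end

section
/- Define G(t) = ∫_1^t (x/(x−1))^{1/2} dx for t ≥ 1. Then G is strictly increasing, maps [1,∞) onto [0,∞), and the function h(s) = G⁻¹(√2 |s|) is a C² function on ℝ satisfying h(s)² · h''(s) = 1 for all s, with h(0) = 1, h'(0) = 0, h ≥ 1, and h convex. -/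
/-!
Substituting `x = cosh² θ` gives the primitive `√(t(t-1)) + arcosh √t` of `√(x/(x-1))`; it is
continuous at `1` and has a nonnegative derivative, so it computes the improper integral `G`.
Since `G' = √(t/(t-1)) ≥ 1`, `G` is strictly increasing and expanding, hence onto `[0, ∞)`, and
`h = G⁻¹(√2 |·|)` is even and `√2`-Lipschitz. For `s > 0` the inverse function theorem gives
`h' = √2 / G'(h) = √(2 - 2/h)`, and differentiating once more `h'' = 1/h²`. At `s = 0`, where `G'`
blows up, `h` and `h'` are continuous and their derivatives have limits `0` and `1`, which is
enough for them to be differentiable there.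
-/

open Real Set Filter

/-- `G t = ∫_1^t (x/(x-1))^{1/2} dx`. -/
noncomputable def Gfun (t : ℝ) : ℝ := ∫ x in (1:ℝ)..t, Real.sqrt (x / (x - 1))

open intervalIntegral Topology

/-- `arsinh √(t - 1)` is `arcosh √t` for `t ≥ 1`, but continuous on all of `ℝ`. -/
noncomputable def gfunClosedForm (t : ℝ) : ℝ := √(t * (t - 1)) + arsinh √(t - 1)

lemma hasDerivAt_gfunClosedForm {t : ℝ} (ht : 1 < t) :
    HasDerivAt gfunClosedForm √(t / (t - 1)) t := by
  have ht0 : 0 < t - 1 := sub_pos.2 ht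
  have hprod : HasDerivAt (fun x => x * (x - 1)) (1 * (t - 1) + t * 1) t :=
    (hasDerivAt_id t).mul ((hasDerivAt_id t).sub_const 1)
  have hsub : HasDerivAt (fun x => x - 1) 1 t := (hasDerivAt_id t).sub_const 1
  refine ((hprod.sqrt (by positivity)).add ((hsub.sqrt ht0.ne').arsinh)).congr_deriv ?_
  have ha : 0 < √t := sqrt_pos.2 (by linarith)
  have hb : 0 < √(t - 1) := sqrt_pos.2 ht0
  rw [sqrt_mul (by linarith), sqrt_div' _ ht0.le, sq_sqrt ht0.le, add_sub_cancel, smul_eq_mul]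
  field_simp
  nlinarith [sq_sqrt (show 0 ≤ t by linarith), sq_sqrt ht0.le]

lemma continuous_gfunClosedForm : Continuous gfunClosedForm := by
  unfold gfunClosedForm
  exact (continuous_id.mul (continuous_id.sub continuous_const)).sqrt.add
    (continuous_id.sub continuous_const).sqrt.arsinh

lemma gfunClosedForm_one : gfunClosedForm 1 = 0 := by simp [gfunClosedForm]

lemma one_le_sqrt_div_sub_one {x : ℝ} (hx : 1 < x) : 1 ≤ √(x / (x - 1)) :=
  one_le_sqrt.2 ((one_le_div (sub_pos.2 hx)).2 (by linarith))

lemma Gfun_eq_gfunClosedForm {t : ℝ} (ht : 1 ≤ t) : Gfun t = gfunClosedForm t := by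
  have hderiv : ∀ x ∈ Ioo 1 t, HasDerivAt gfunClosedForm √(x / (x - 1)) x :=
    fun x hx => hasDerivAt_gfunClosedForm hx.1
  have hint := (intervalIntegrable_iff_integrableOn_Ioc_of_le ht).2 <|
    integrableOn_deriv_of_nonneg continuous_gfunClosedForm.continuousOn hderiv
      fun x _ => sqrt_nonneg _
  rw [Gfun, integral_eq_sub_of_hasDerivAt_of_le ht continuous_gfunClosedForm.continuousOn
    hderiv hint, gfunClosedForm_one, sub_zero]

lemma Gfun_one : Gfun 1 = 0 := integral_same

lemma sub_le_gfunClosedForm_sub {a b : ℝ} (ha : 1 ≤ a) (hab : a ≤ b) :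
    b - a ≤ gfunClosedForm b - gfunClosedForm a := by
  have hderiv : ∀ x ∈ interior (Ici (1 : ℝ)), HasDerivAt gfunClosedForm √(x / (x - 1)) x :=
    fun x hx => hasDerivAt_gfunClosedForm (by rwa [interior_Ici] at hx)
  have := (convex_Ici (1 : ℝ)).mul_sub_le_image_sub_of_le_deriv
    continuous_gfunClosedForm.continuousOn
    (fun x hx => (hderiv x hx).differentiableAt.differentiableWithinAt)
    (fun x hx => (hderiv x hx).deriv ▸ one_le_sqrt_div_sub_one (by rwa [interior_Ici] at hx))
    a ha b (ha.trans hab) hab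
  rwa [one_mul] at this

lemma sub_le_Gfun_sub {a b : ℝ} (ha : 1 ≤ a) (hab : a ≤ b) : b - a ≤ Gfun b - Gfun a := by
  rw [Gfun_eq_gfunClosedForm ha, Gfun_eq_gfunClosedForm (ha.trans hab)]
  exact sub_le_gfunClosedForm_sub ha hab

lemma abs_sub_le_abs_Gfun_sub {a b : ℝ} (ha : 1 ≤ a) (hb : 1 ≤ b) :
    |b - a| ≤ |Gfun b - Gfun a| := by
  rcases le_total a b with hab | hab
  · rw [abs_of_nonneg (sub_nonneg.2 hab)]
    exact (sub_le_Gfun_sub ha hab).trans (le_abs_self _)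
  · rw [abs_sub_comm, abs_of_nonneg (sub_nonneg.2 hab), abs_sub_comm]
    exact (sub_le_Gfun_sub hb hab).trans (le_abs_self _)

lemma strictMonoOn_Gfun : StrictMonoOn Gfun (Ici 1) := fun a ha _ _ hab => by
  linarith [sub_le_Gfun_sub ha hab.le]

lemma Gfun_image_Ici : Gfun '' Ici 1 = Ici 0 := by
  refine (image_subset_iff.2 fun x hx => ?_).antisymm fun y hy => ?_
  · have := sub_le_Gfun_sub le_rfl (mem_Ici.1 hx)
    show 0 ≤ Gfun x
    linarith [mem_Ici.1 hx, Gfun_one]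
  · have hb : (1 : ℝ) ≤ y + 1 := by linarith [mem_Ici.1 hy]
    have hGb : y ≤ Gfun (y + 1) := by linarith [sub_le_Gfun_sub le_rfl hb, Gfun_one]
    have hcont : ContinuousOn Gfun (Icc 1 (y + 1)) :=
      continuous_gfunClosedForm.continuousOn.congr fun x hx => Gfun_eq_gfunClosedForm hx.1
    obtain ⟨x, hx, rfl⟩ := intermediate_value_Icc hb hcont ⟨Gfun_one ▸ mem_Ici.1 hy, hGb⟩
    exact ⟨x, hx.1, rfl⟩

lemma hasDerivAt_Gfun {t : ℝ} (ht : 1 < t) : HasDerivAt Gfun √(t / (t - 1)) t :=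
  (hasDerivAt_gfunClosedForm ht).congr_of_eventuallyEq <|
    (eventually_gt_nhds ht).mono fun _ hx => Gfun_eq_gfunClosedForm hx.le

lemma HasDerivAt.of_eq_mul_comp_neg {f : ℝ → ℝ} {c f' s : ℝ} (hf : ∀ y, f y = c * f (-y))
    (hd : HasDerivAt f f' (-s)) : HasDerivAt f (-(c * f')) s := by
  have := (hd.comp s (hasDerivAt_neg s)).const_mul c
  rwa [show (fun y => c * (f ∘ Neg.neg) y) = f from funext fun y => (hf y).symm,
    mul_neg_one, mul_neg] at this

lemma contDiff_two_of_hasDerivAt {f f' f'' : ℝ → ℝ} (hf : ∀ x, HasDerivAt f (f' x) x)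
    (hf' : ∀ x, HasDerivAt f' (f'' x) x) (hf'' : Continuous f'') : ContDiff ℝ 2 f := by
  have hderiv : deriv f = f' := funext fun x => (hf x).deriv
  rw [show (2 : WithTop ℕ∞) = 1 + 1 from rfl, contDiff_succ_iff_deriv, hderiv,
    contDiff_one_iff_deriv, funext fun x => (hf' x).deriv]
  exact ⟨fun x => (hf x).differentiableAt, by simp, fun x => (hf' x).differentiableAt, hf''⟩

def IsGfunInverseProfile (h : ℝ → ℝ) : Prop := ∀ s : ℝ, h s ∈ Ici 1 ∧ Gfun (h s) = √2 * |s|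

/-- `h'` is determined by the first integral `h'² = 2 - 2/h` of `h² h'' = 1`, `h(0) = 1`,
`h'(0) = 0`, and has the sign of `s`. -/
noncomputable def signedSpeed (h : ℝ → ℝ) (s : ℝ) : ℝ := Real.sign s * √(2 - 2 / h s)

namespace IsGfunInverseProfile

variable {h : ℝ → ℝ} (hh : IsGfunInverseProfile h)
include hh

lemma one_le (s : ℝ) : 1 ≤ h s := (hh s).1

lemma pos (s : ℝ) : 0 < h s := one_pos.trans_le (hh.one_le s)

lemma map_zero : h 0 = 1 :=
  strictMonoOn_Gfun.injOn (hh 0).1 (mem_Ici.2 le_rfl) <| by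
    rw [(hh 0).2, abs_zero, mul_zero, Gfun_one]

lemma one_lt {s : ℝ} (hs : s ≠ 0) : 1 < h s := by
  refine (hh.one_le s).lt_of_ne fun h1 => hs ?_
  have := (hh s).2
  rw [← h1, Gfun_one] at this
  simpa using this

lemma map_neg (s : ℝ) : h (-s) = h s :=
  strictMonoOn_Gfun.injOn (hh (-s)).1 (hh s).1 <| by rw [(hh _).2, (hh _).2, abs_neg]

lemma continuous : Continuous h := by
  refine (LipschitzWith.of_dist_le_mul (K := (√2).toNNReal) fun s t => ?_).continuous
  rw [Real.dist_eq, Real.dist_eq, coe_toNNReal _ (sqrt_nonneg 2)]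
  calc |h s - h t| ≤ |Gfun (h s) - Gfun (h t)| := abs_sub_le_abs_Gfun_sub (hh t).1 (hh s).1
    _ = √2 * |(|s| - |t|)| := by
      rw [(hh s).2, (hh t).2, ← mul_sub, abs_mul, abs_of_nonneg (sqrt_nonneg 2)]
    _ ≤ √2 * |s - t| :=
      mul_le_mul_of_nonneg_left (abs_abs_sub_abs_le_abs_sub s t) (sqrt_nonneg 2)

lemma continuous_one_div_sq : Continuous fun s => 1 / h s ^ 2 :=
  continuous_const.div (hh.continuous.pow 2) fun s => (pow_pos (hh.pos s) 2).ne'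

lemma signedSpeed_neg (s : ℝ) : signedSpeed h (-s) = -signedSpeed h s := by
  rw [signedSpeed, signedSpeed, hh.map_neg, Real.sign_neg, neg_mul]

lemma hasDerivAt_of_pos {s : ℝ} (hs : 0 < s) : HasDerivAt h (signedSpeed h s) s := by
  have h1 := hh.one_lt hs.ne'
  have hsub : 0 < h s - 1 := sub_pos.2 h1
  have hf : HasDerivAt (fun t => Gfun t / √2) (√(h s / (h s - 1)) / √2) (h s) :=
    (hasDerivAt_Gfun h1).div_const _
  have hinv := hf.of_local_left_inverse hh.continuous.continuousAt (by positivity) <|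
    (eventually_gt_nhds hs).mono fun y hy => by
      rw [(hh y).2, abs_of_pos hy, mul_div_cancel_left₀ _ (by positivity)]
  refine hinv.congr_deriv ?_
  rw [signedSpeed, Real.sign_of_pos hs, one_mul, inv_div, ← sqrt_div' _ (by positivity)]
  congr 1
  field_simp

lemma continuousAt_signedSpeed_zero : ContinuousAt (signedSpeed h) 0 := by
  have hspeed : Tendsto (fun s => √(2 - 2 / h s)) (𝓝 0) (𝓝 0) := by
    have hcont : Continuous fun s => √(2 - 2 / h s) :=
      (continuous_const.sub (continuous_const.div hh.continuous fun s => (hh.pos s).ne')).sqrt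
    simpa [hh.map_zero] using hcont.tendsto 0
  rw [ContinuousAt, show signedSpeed h 0 = 0 by simp [signedSpeed]]
  refine squeeze_zero_norm (fun s => ?_) hspeed
  rw [signedSpeed, norm_mul, Real.norm_eq_abs, Real.norm_of_nonneg (sqrt_nonneg _)]
  refine mul_le_of_le_one_left (sqrt_nonneg _) ?_
  rcases Real.sign_apply_eq s with h' | h' | h' <;> simp [h']

lemma hasDerivAt (s : ℝ) : HasDerivAt h (signedSpeed h s) s := by
  refine hasDerivAt_of_hasDerivAt_of_ne' (fun y hy => ?_) hh.continuous.continuousAt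
    hh.continuousAt_signedSpeed_zero s
  rcases hy.lt_or_gt with hy | hy
  · have := (hh.hasDerivAt_of_pos (neg_pos.2 hy)).of_eq_mul_comp_neg (c := 1)
      fun y => by rw [one_mul, hh.map_neg]
    rwa [one_mul, hh.signedSpeed_neg, neg_neg] at this
  · exact hh.hasDerivAt_of_pos hy

lemma hasDerivAt_signedSpeed_of_pos {s : ℝ} (hs : 0 < s) :
    HasDerivAt (signedSpeed h) (1 / h s ^ 2) s := by
  have hpos : 0 < 2 - 2 / h s := by
    have := hh.one_lt hs.ne'
    rw [sub_pos, div_lt_iff₀ (hh.pos s)]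
    linarith
  have hspeed : signedSpeed h s = √(2 - 2 / h s) := by
    rw [signedSpeed, Real.sign_of_pos hs, one_mul]
  have hd : HasDerivAt (fun y => √(2 - 2 / h y))
      (-((0 * h s - 2 * signedSpeed h s) / h s ^ 2) / (2 * √(2 - 2 / h s))) s :=
    ((hasDerivAt_const s (2 : ℝ)).div (hh.hasDerivAt s) (hh.pos s).ne').const_sub 2
      |>.sqrt hpos.ne'
  refine (hd.congr_deriv ?_).congr_of_eventuallyEq <| (eventually_gt_nhds hs).mono
    fun y hy => by rw [signedSpeed, Real.sign_of_pos hy, one_mul]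
  have hr := (sqrt_pos.2 hpos).ne'
  have hs0 := (hh.pos s).ne'
  rw [hspeed]
  generalize √(2 - 2 / h s) = r at hr ⊢
  field_simp
  ring

lemma hasDerivAt_signedSpeed (s : ℝ) : HasDerivAt (signedSpeed h) (1 / h s ^ 2) s := by
  refine hasDerivAt_of_hasDerivAt_of_ne' (fun y hy => ?_) hh.continuousAt_signedSpeed_zero
    hh.continuous_one_div_sq.continuousAt s
  rcases hy.lt_or_gt with hy | hy
  · have := (hh.hasDerivAt_signedSpeed_of_pos (neg_pos.2 hy)).of_eq_mul_comp_neg (c := -1)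
      fun y => by rw [hh.signedSpeed_neg, neg_one_mul, neg_neg]
    rwa [neg_one_mul, neg_neg, hh.map_neg] at this
  · exact hh.hasDerivAt_signedSpeed_of_pos hy

end IsGfunInverseProfile

theorem inverse_of_G_solves_ODE :
    StrictMonoOn Gfun (Ici 1) ∧ Gfun '' (Ici 1) = Ici 0 ∧
    ∀ h : ℝ → ℝ, (∀ s : ℝ, h s ∈ Ici 1 ∧ Gfun (h s) = Real.sqrt 2 * |s|) →
      ContDiff ℝ 2 h ∧ (∀ s, (h s) ^ 2 * deriv (deriv h) s = 1) ∧
      h 0 = 1 ∧ deriv h 0 = 0 ∧ (∀ s, 1 ≤ h s) ∧ ConvexOn ℝ univ h := by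
  refine ⟨strictMonoOn_Gfun, Gfun_image_Ici, fun h (hh : IsGfunInverseProfile h) => ?_⟩
  have hderiv : deriv h = signedSpeed h := funext fun s => (hh.hasDerivAt s).deriv
  have hderiv2 : deriv (deriv h) = fun s => 1 / h s ^ 2 := by
    rw [hderiv]; exact funext fun s => (hh.hasDerivAt_signedSpeed s).deriv
  refine ⟨contDiff_two_of_hasDerivAt hh.hasDerivAt hh.hasDerivAt_signedSpeed
      hh.continuous_one_div_sq, fun s => ?_, hh.map_zero, by simp [hderiv, signedSpeed],
    hh.one_le, ?_⟩
  · rw [hderiv2, mul_one_div_cancel (pow_pos (hh.pos s) 2).ne']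
  · refine convexOn_univ_of_deriv2_nonneg (fun s => (hh.hasDerivAt s).differentiableAt)
      (hderiv ▸ fun s => (hh.hasDerivAt_signedSpeed s).differentiableAt) fun s => ?_
    rw [Function.iterate_succ_apply, Function.iterate_one, hderiv2]
    positivity
end

section
/- If g : (0,∞) → ℝ is twice differentiable and satisfies g(t) g''(t) (t² g''(t) − (2/3) t g'(t) + (4/9) g(t)) = 1 for all t > 0, then g̃(t) := t^{4/3} g(1/t) also satisfies the same ODE on (0,∞). -/
/-!
Write `u = 1/t` and `G(t) = t^p g(u)`. Differentiating twice gives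
`G''(t) = t^(p-2) (p(p-1) g(u) - 2(p-1) u g'(u) + u² g''(u))`, which for `p = 4/3` is
`t^(-2/3)` times the bracket of the equation for `g` at `u`, while the bracket of the equation
for `G` at `t` collapses to `t^(-2/3) g''(u)`. Since `(t^(-2/3))³ t² = 1`, the left-hand side of
the equation for `G` at `t` equals that for `g` at `u`.
-/

section ReflectRpow

variable (g : ℝ → ℝ) (p : ℝ) {t : ℝ}

theorem hasDerivAt_rpow_mul_comp_inv (ht : 0 < t) (hg : DifferentiableAt ℝ g t⁻¹) :
    HasDerivAt (fun s => s ^ p * g s⁻¹)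
      (p * t ^ (p - 1) * g t⁻¹ - t ^ (p - 2) * deriv g t⁻¹) t := by
  refine ((Real.hasDerivAt_rpow_const (Or.inl ht.ne')).mul
    (hg.hasDerivAt.comp t (hasDerivAt_inv ht.ne'))).congr_deriv ?_
  rw [Real.rpow_sub ht p 2, Real.rpow_two, Function.comp_apply]
  ring

theorem hasDerivAt_deriv_rpow_mul_comp_inv (ht : 0 < t)
    (hg : ∀ s > 0, DifferentiableAt ℝ g s) (hg' : DifferentiableAt ℝ (deriv g) t⁻¹) :
    HasDerivAt (deriv fun s => s ^ p * g s⁻¹)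
      (t ^ (p - 2) * (p * (p - 1) * g t⁻¹ - 2 * (p - 1) * t⁻¹ * deriv g t⁻¹
        + t⁻¹ ^ 2 * deriv (deriv g) t⁻¹)) t := by
  -- `G'` is again a combination of terms `s ^ q * f s⁻¹`, with `(q, f) = (p - 1, g), (p - 2, g')`.
  have h := ((hasDerivAt_rpow_mul_comp_inv g (p - 1) ht (hg _ (inv_pos.2 ht))).const_mul p).sub
    (hasDerivAt_rpow_mul_comp_inv (deriv g) (p - 2) ht hg')
  refine (h.congr_of_eventuallyEq ?_).congr_deriv ?_
  · filter_upwards [Ioi_mem_nhds ht] with s hs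
    rw [(hasDerivAt_rpow_mul_comp_inv g p hs (hg _ (inv_pos.2 hs))).deriv, mul_assoc]
    rfl
  · simp only [sub_sub, Real.rpow_sub ht, Real.rpow_add ht, Real.rpow_one, Real.rpow_two]
    norm_num
    field_simp
    ring

end ReflectRpow

theorem ode_reflection_symmetry (g : ℝ → ℝ)
    (hg1 : ∀ t > (0:ℝ), DifferentiableAt ℝ g t)
    (hg2 : ∀ t > (0:ℝ), DifferentiableAt ℝ (deriv g) t)
    (hode : ∀ t > (0:ℝ), g t * deriv (deriv g) t *
      (t ^ 2 * deriv (deriv g) t - (2/3) * t * deriv g t + (4/9) * g t) = 1) :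
    ∀ t > (0:ℝ),
      (fun s => s ^ ((4:ℝ)/3) * g (1/s)) t *
        deriv (deriv (fun s => s ^ ((4:ℝ)/3) * g (1/s))) t *
        (t ^ 2 * deriv (deriv (fun s => s ^ ((4:ℝ)/3) * g (1/s))) t -
          (2/3) * t * deriv (fun s => s ^ ((4:ℝ)/3) * g (1/s)) t +
          (4/9) * (fun s => s ^ ((4:ℝ)/3) * g (1/s)) t) = 1 := by
  intro t ht
  have ht' : 0 < t⁻¹ := inv_pos.2 ht
  simp only [one_div]
  rw [(hasDerivAt_deriv_rpow_mul_comp_inv g _ ht hg1 (hg2 _ ht')).deriv,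
    (hasDerivAt_rpow_mul_comp_inv g _ ht (hg1 _ ht')).deriv]
  set r := t ^ ((4:ℝ)/3 - 2)
  have hr : r ^ 3 * t ^ 2 = 1 := by
    rw [← Real.rpow_natCast, ← Real.rpow_mul ht.le, ← Real.rpow_natCast t 2, ← Real.rpow_add ht]
    norm_num
  have h1 : t ^ ((4:ℝ)/3 - 1) = r * t := by
    rw [← Real.rpow_add_one ht.ne']; norm_num
  have h0 : t ^ ((4:ℝ)/3) = r * t ^ 2 := by
    rw [← Real.rpow_add_natCast ht.ne']; norm_num
  rw [h0, h1]
  calc _ = r ^ 3 * t ^ 2 * (g t⁻¹ * deriv (deriv g) t⁻¹ * (t⁻¹ ^ 2 * deriv (deriv g) t⁻¹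
        - (2/3) * t⁻¹ * deriv g t⁻¹ + (4/9) * g t⁻¹)) := by
        field_simp
        ring
    _ = 1 := by rw [hr, hode _ ht', one_mul]
end

section
/- Let h₁ : [0, T) → ℝ be a solution of the linear ODE (a(t)) h'' − b(t) t h' + c(t) h = 0 with a, c > 0 and b ≥ 0 continuous, with h₁(0) < 0 and h₁'(0) = 0. Then on any interval [0, s] ⊂ [0,T) on which h₁ < 0, we have h₁'' ≥ 0 (h₁ is convex where it is negative), and h₁' ≥ 0 on that interval. -/
/-!
Write `g = h₁'`. Where `h₁ < 0` the equation gives `a h₁'' = b t g - c h₁ > 0` as soon as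
`g ≥ 0`; in particular `g' > 0` at every zero of `g`, so `g`, which starts at `g 0 = 0`, can never
cross below zero. Hence `g ≥ 0` and then `h₁'' > 0` on the whole interval.
-/

open Set

theorem nonneg_of_deriv_right_pos_at_zeros {g g' : ℝ → ℝ} {a b : ℝ}
    (hg : ContinuousOn g (Icc a b))
    (hg' : ∀ x ∈ Ico a b, HasDerivWithinAt g (g' x) (Ici x) x) (ha : 0 ≤ g a)
    (hzero : ∀ x ∈ Ico a b, g x = 0 → 0 < g' x) : ∀ ⦃x⦄, x ∈ Icc a b → 0 ≤ g x :=
  image_le_of_deriv_right_lt_deriv_boundary' continuousOn_const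
    (fun x _ => hasDerivWithinAt_const x _ 0) ha hg hg' fun x hx h0 => hzero x hx h0.symm

theorem second_deriv_pos_of_ode {a b c t h h' h'' : ℝ} (ha : 0 < a) (hc : 0 < c) (hb : 0 ≤ b)
    (ht : 0 ≤ t) (hh : h < 0) (hh' : 0 ≤ h') (hode : a * h'' - b * t * h' + c * h = 0) :
    0 < h'' := by
  have hdrift : 0 ≤ b * t * h' := mul_nonneg (mul_nonneg hb ht) hh'
  have hforce : c * h < 0 := mul_neg_of_pos_of_neg hc hh
  exact pos_of_mul_pos_right (a := a) (by linarith) ha.le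

theorem convexity_where_negative_general (T : ℝ) (a b c h1 : ℝ → ℝ)
    (hapos : ∀ t ∈ Ico 0 T, 0 < a t) (hcpos : ∀ t ∈ Ico 0 T, 0 < c t)
    (hbnn : ∀ t ∈ Ico 0 T, 0 ≤ b t)
    (hdiff2 : ∀ t ∈ Ico 0 T, DifferentiableAt ℝ (deriv h1) t)
    (hode : ∀ t ∈ Ico 0 T,
      a t * deriv (deriv h1) t - b t * t * deriv h1 t + c t * h1 t = 0)
    (hinit' : deriv h1 0 = 0) :
    ∀ s, 0 ≤ s → s < T → (∀ t ∈ Icc 0 s, h1 t < 0) →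
      ∀ t ∈ Icc 0 s, 0 ≤ deriv (deriv h1) t ∧ 0 ≤ deriv h1 t := by
  intro s _ hsT hneg
  have hsub : Icc 0 s ⊆ Ico 0 T := fun t ht => ⟨ht.1, ht.2.trans_lt hsT⟩
  have hconvex : ∀ t ∈ Icc 0 s, 0 ≤ deriv h1 t → 0 < deriv (deriv h1) t := fun t ht hg =>
    second_deriv_pos_of_ode (hapos t (hsub ht)) (hcpos t (hsub ht)) (hbnn t (hsub ht)) ht.1
      (hneg t ht) hg (hode t (hsub ht))
  have hmono : ∀ ⦃t⦄, t ∈ Icc 0 s → 0 ≤ deriv h1 t :=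
    nonneg_of_deriv_right_pos_at_zeros
      (fun t ht => (hdiff2 t (hsub ht)).continuousAt.continuousWithinAt)
      (fun t ht => (hdiff2 t (hsub (Ico_subset_Icc_self ht))).hasDerivAt.hasDerivWithinAt)
      hinit'.ge fun t ht h0 => hconvex t (Ico_subset_Icc_self ht) h0.ge
  exact fun t ht => ⟨(hconvex t ht (hmono ht)).le, hmono ht⟩

theorem convexity_where_negative (T : ℝ) (hT : 0 < T) (a b c h1 : ℝ → ℝ)
    (ha : ContinuousOn a (Ico 0 T)) (hbcont : ContinuousOn b (Ico 0 T))
    (hc : ContinuousOn c (Ico 0 T))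
    (hapos : ∀ t ∈ Ico 0 T, 0 < a t) (hcpos : ∀ t ∈ Ico 0 T, 0 < c t)
    (hbnn : ∀ t ∈ Ico 0 T, 0 ≤ b t)
    (hdiff1 : ∀ t ∈ Ico 0 T, DifferentiableAt ℝ h1 t)
    (hdiff2 : ∀ t ∈ Ico 0 T, DifferentiableAt ℝ (deriv h1) t)
    (hode : ∀ t ∈ Ico 0 T,
      a t * deriv (deriv h1) t - b t * t * deriv h1 t + c t * h1 t = 0)
    (hinit : h1 0 < 0) (hinit' : deriv h1 0 = 0) :
    ∀ s, 0 ≤ s → s < T → (∀ t ∈ Icc 0 s, h1 t < 0) →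
      ∀ t ∈ Icc 0 s, 0 ≤ deriv (deriv h1) t ∧ 0 ≤ deriv h1 t :=
  convexity_where_negative_general T a b c h1 hapos hcpos hbnn hdiff2 hode hinit'
end
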